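/- Let n be odd and let G = K₂ ∨ M_{n−2} be the graph obtained from K₂ + M_{n−3} by adding one new vertex u adjacent to one endpoint of each of two distinct matching edges. Then G is planar, has n vertices and ⌊5n/2⌋ − 4 edges, and contains no vertex-disjoint union of C₃ and Θ₄. -/

import Mathlib

/-- Θ₄ : K₄ minus the edge 1-3. -/
def theta4 : SimpleGraph (Fin 4) :=
  (SimpleGraph.completeGraph (Fin 4)).deleteEdges {s(1, 3)}

/-- C₃ ∪̇ Θ₄ : the vertex-disjoint union of a triangle and Θ₄. -/
def c3Theta4 : SimpleGraph (Fin 3 ⊕ Fin 4) :=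
  SimpleGraph.fromRel (fun x y =>
    match x, y with
    | Sum.inl a, Sum.inl b => a ≠ b
    | Sum.inr a, Sum.inr b => theta4.Adj a b
    | _, _ => False)

/-- `G` contains `H` as a subgraph. -/
def Contains {V W : Type} (G : SimpleGraph V) (H : SimpleGraph W) : Prop :=
  ∃ φ : H →g G, Function.Injective φ

/-- Minor relation (branch decompositions). -/
def HasMinor {V W : Type} (G : SimpleGraph V) (H : SimpleGraph W) : Prop :=
  ∃ f : W → Set V,
    (∀ w, (f w).Nonempty) ∧
    (∀ w, (G.induce (f w)).Connected) ∧
    (Pairwise fun a b => Disjoint (f a) (f b)) ∧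
    ∀ a b, H.Adj a b → ∃ x ∈ f a, ∃ y ∈ f b, G.Adj x y

/-- Planarity via Wagner's characterization. -/
def IsPlanar {V : Type} (G : SimpleGraph V) : Prop :=
  ¬ HasMinor G (SimpleGraph.completeGraph (Fin 5)) ∧
  ¬ HasMinor G (completeBipartiteGraph (Fin 3) (Fin 3))

/-- K₂ ∨ M_{n−2}: the join of an edge (the two vertices `inl (inl _)`) with the
matching M_{n−3} (vertices `inl (inr _)`, matched in pairs {2k, 2k+1}), together
with one extra vertex u (= `inr ()`) joined to the vertices 0 and 2, which are
endpoints of two distinct matching edges. -/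
def k2veeM (n : ℕ) : SimpleGraph ((Fin 2 ⊕ Fin (n - 3)) ⊕ Unit) :=
  SimpleGraph.fromRel (fun x y =>
    match x, y with
    | Sum.inl (Sum.inl _), Sum.inl _ => True
    | Sum.inl (Sum.inr a), Sum.inl (Sum.inr b) => (a : ℕ) / 2 = (b : ℕ) / 2
    | Sum.inr _, Sum.inl (Sum.inr v) => (v : ℕ) = 0 ∨ (v : ℕ) = 2
    | _, _ => False)

/-!
Deleting the two vertices `x`, `y` of `K₂` leaves the path `1 – 0 – u – 2 – 3` together with the
remaining matching edges, and this forest embeds into the path on `ℕ`. In a `K₅`- or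
`K₃,₃`-minor at most two branch sets meet `{x, y}`; the others map to pairwise disjoint intervals
of `ℕ`, adjacent branch sets to touching intervals. Touching intervals form neither a triangle, nor
a claw, nor a 4-cycle, while `K₅` and `K₃,₃` minus two vertices contain one of these.

The same embedding shows that every triangle meets `{x, y}`. So in a copy of `C₃ ∪̇ Θ₄` one of
`x`, `y` lies in `C₃` and the other on both triangles of `Θ₄`, i.e. on a vertex of degree 3 of `Θ₄`.
Its three neighbours in `Θ₄` contain a path with two edges, whereas the neighbours of `x` (or of
`y`) outside `{x, y}` span only a matching. The edge count is the handshake lemma.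
-/

def Touch (I J : Set ℕ) : Prop := ∃ x ∈ I, ∃ y ∈ J, x + 1 = y ∨ y + 1 = x

def Below (I J : Set ℕ) : Prop := ∀ x ∈ I, ∀ y ∈ J, x < y

section Intervals

variable {I J K : Set ℕ}

theorem Touch.symm (h : Touch I J) : Touch J I := by
  obtain ⟨x, hx, y, hy, h⟩ := h
  exact ⟨y, hy, x, hx, h.symm⟩

theorem below_or_below_of_disjoint (hI : I.OrdConnected) (hJ : J.OrdConnected)
    (hIJ : Disjoint I J) (hIn : I.Nonempty) (hJn : J.Nonempty) : Below I J ∨ Below J I := by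
  obtain ⟨i₀, hi₀⟩ := hIn
  obtain ⟨j₀, hj₀⟩ := hJn
  have hne : i₀ ≠ j₀ := hIJ.ne_of_mem hi₀ hj₀
  rcases hne.lt_or_gt with h | h
  · refine .inl fun i hi j hj => not_le.1 fun hji => ?_
    rcases le_total i₀ j with h' | h'
    · exact hIJ.ne_of_mem (hI.out hi₀ hi ⟨h', hji⟩) hj rfl
    · exact hIJ.ne_of_mem hi₀ (hJ.out hj hj₀ ⟨h', h.le⟩) rfl
  · refine .inr fun j hj i hi => not_le.1 fun hij => ?_
    rcases le_total j₀ i with h' | h'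
    · exact hIJ.ne_of_mem hi (hJ.out hj₀ hj ⟨h', hij⟩) rfl
    · exact hIJ.ne_of_mem (hI.out hi hi₀ ⟨h', h.le⟩) hj₀ rfl

theorem Below.not_touch (hJ : J.Nonempty) (hIJ : Below I J) (hJK : Below J K) : ¬Touch I K := by
  rintro ⟨x, hx, z, hz, h⟩
  obtain ⟨y, hy⟩ := hJ
  have := hIJ x hx y hy
  have := hJK y hy z hz
  omega

/-- Both `J` and `K` contain the point just above `I`, or both the point just below it. -/
theorem not_disjoint_of_touch_of_same_side
    (hside : (Below I J ∧ Below I K) ∨ (Below J I ∧ Below K I)) (hJ : Touch I J)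
    (hK : Touch I K) : ¬Disjoint J K := by
  obtain ⟨x₁, hx₁, j, hj, h₁⟩ := hJ
  obtain ⟨x₂, hx₂, k, hk, h₂⟩ := hK
  have hjk : j = k := by
    rcases hside with ⟨hIJ, hIK⟩ | ⟨hJI, hKI⟩
    · have := hIJ x₁ hx₁ j hj; have := hIJ x₂ hx₂ j hj
      have := hIK x₁ hx₁ k hk; have := hIK x₂ hx₂ k hk
      omega
    · have := hJI j hj x₁ hx₁; have := hJI j hj x₂ hx₂
      have := hKI k hk x₁ hx₁; have := hKI k hk x₂ hx₂
      omega
  exact Set.not_disjoint_iff.2 ⟨j, hj, hjk ▸ hk⟩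

end Intervals

structure IsIntervalModel {W : Type*} (H : SimpleGraph W) (g : W → Set ℕ) : Prop where
  nonempty : ∀ w, (g w).Nonempty
  ordConnected : ∀ w, (g w).OrdConnected
  disjoint : Pairwise fun a b => Disjoint (g a) (g b)
  touch : ∀ ⦃a b⦄, H.Adj a b → Touch (g a) (g b)

namespace IsIntervalModel

variable {W : Type*} {H : SimpleGraph W} {g : W → Set ℕ} {a b c d : W}

theorem below_or_below (hg : IsIntervalModel H g) (hab : a ≠ b) :
    Below (g a) (g b) ∨ Below (g b) (g a) :=
  below_or_below_of_disjoint (hg.ordConnected a) (hg.ordConnected b) (hg.disjoint hab)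
    (hg.nonempty a) (hg.nonempty b)

theorem not_same_side (hg : IsIntervalModel H g) (hab : H.Adj a b) (hac : H.Adj a c)
    (hbc : b ≠ c) :
    ¬((Below (g a) (g b) ∧ Below (g a) (g c)) ∨ (Below (g b) (g a) ∧ Below (g c) (g a))) :=
  fun hside => not_disjoint_of_touch_of_same_side hside (hg.touch hab) (hg.touch hac)
    (hg.disjoint hbc)

theorem not_triangle (hg : IsIntervalModel H g) (hab : H.Adj a b) (hbc : H.Adj b c)
    (hac : H.Adj a c) : False := by
  have hside := hg.not_same_side hab hac hbc.ne
  rcases hg.below_or_below hab.ne with hb | hb <;> rcases hg.below_or_below hac.ne with hc | hc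
  · exact hside (.inl ⟨hb, hc⟩)
  · exact hc.not_touch (hg.nonempty a) hb (hg.touch hbc).symm
  · exact hb.not_touch (hg.nonempty a) hc (hg.touch hbc)
  · exact hside (.inr ⟨hb, hc⟩)

theorem not_claw (hg : IsIntervalModel H g) (hab : H.Adj a b) (hac : H.Adj a c)
    (had : H.Adj a d) (hbc : b ≠ c) (hbd : b ≠ d) (hcd : c ≠ d) : False := by
  have := hg.not_same_side hab hac hbc
  have := hg.not_same_side hab had hbd
  have := hg.not_same_side hac had hcd
  have := hg.below_or_below hab.ne
  have := hg.below_or_below hac.ne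
  have := hg.below_or_below had.ne
  tauto

theorem not_square (hg : IsIntervalModel H g) (hab : H.Adj a b) (hbc : H.Adj b c)
    (hcd : H.Adj c d) (hda : H.Adj d a) (hac : a ≠ c) (hbd : b ≠ d) : False := by
  have hside := hg.not_same_side hab hda.symm hbd
  rcases hg.below_or_below hab.ne with hb | hb <;>
    rcases hg.below_or_below hda.ne' with hd | hd <;> rcases hg.below_or_below hac with hc | hc
  all_goals first
    | exact hside (.inl ⟨hb, hd⟩) | exact hside (.inr ⟨hb, hd⟩)
    | exact hb.not_touch (hg.nonempty a) hc (hg.touch hbc)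
    | exact hd.not_touch (hg.nonempty a) hc (hg.touch hcd).symm
    | exact hc.not_touch (hg.nonempty a) hb (hg.touch hbc).symm
    | exact hc.not_touch (hg.nonempty a) hd (hg.touch hcd)

end IsIntervalModel

def IsPathHomOn {V : Type*} (G : SimpleGraph V) (S : Set V) (φ : V → ℕ) : Prop :=
  ∀ ⦃a⦄, a ∈ S → ∀ ⦃b⦄, b ∈ S → G.Adj a b → φ a + 1 = φ b ∨ φ b + 1 = φ a

namespace IsPathHomOn

variable {V : Type*} {G : SimpleGraph V} {S A : Set V} {φ : V → ℕ}

theorem mono (h : IsPathHomOn G S φ) (hA : A ⊆ S) : IsPathHomOn G A φ :=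
  fun _ ha _ hb => h (hA ha) (hA hb)

theorem not_triangle (h : IsPathHomOn G S φ) {a b c : V} (ha : a ∈ S) (hb : b ∈ S) (hc : c ∈ S)
    (hab : G.Adj a b) (hbc : G.Adj b c) (hac : G.Adj a c) : False := by
  have := h ha hb hab
  have := h hb hc hbc
  have := h ha hc hac
  omega

theorem uIcc_subset_image (h : IsPathHomOn G A φ) {x y : A} (w : (G.induce A).Walk x y) :
    Set.uIcc (φ x) (φ y) ⊆ φ '' A := by
  induction w with
  | nil => simpa using Set.mem_image_of_mem φ (Subtype.prop _)
  | @cons u v _ huv _ ih =>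
    refine Set.uIcc_subset_uIcc_union_uIcc.trans (Set.union_subset ?_ ih)
    intro k hk
    rw [Set.mem_uIcc] at hk
    have := h u.2 v.2 huv
    rcases eq_or_ne k (φ u) with rfl | hku
    · exact ⟨u, u.2, rfl⟩
    · exact ⟨v, v.2, by omega⟩

theorem ordConnected_image (h : IsPathHomOn G A φ) (hc : (G.induce A).Connected) :
    (φ '' A).OrdConnected := by
  rw [Set.ordConnected_iff_uIcc_subset]
  rintro _ ⟨a, ha, rfl⟩ _ ⟨b, hb, rfl⟩
  obtain ⟨w⟩ := hc.preconnected ⟨a, ha⟩ ⟨b, hb⟩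
  exact h.uIcc_subset_image w

end IsPathHomOn

section Minors

variable {V W : Type} {G : SimpleGraph V} {H : SimpleGraph W}

theorem exists_forall_mem_eq_of_pairwise_disjoint [Nonempty W] {F : W → Set V}
    (hF : Pairwise fun a b => Disjoint (F a) (F b)) (p : V) : ∃ i₀, ∀ i, p ∈ F i → i = i₀ := by
  by_cases h : ∃ i, p ∈ F i
  · obtain ⟨i₀, hi₀⟩ := h
    exact ⟨i₀, fun i hi => hF.eq (Set.not_disjoint_iff.2 ⟨p, hi, hi₀⟩)⟩
  · exact ⟨Classical.arbitrary W, fun i hi => (h ⟨i, hi⟩).elim⟩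

/-- `i₀`, `i₁` index the (at most two) branch sets meeting `{p, q}`; the other branch sets are
mapped by `φ` to intervals. -/
theorem exists_isIntervalModel_of_hasMinor [Nonempty W] {p q : V} {φ : V → ℕ}
    (hinj : Set.InjOn φ {p, q}ᶜ) (hφ : IsPathHomOn G {p, q}ᶜ φ) (hGH : HasMinor G H) :
    ∃ i₀ i₁ : W, ∃ g : W → Set ℕ, IsIntervalModel (H.induce {i₀, i₁}ᶜ) fun i => g i := by
  obtain ⟨F, hne, hconn, hdisj, hadj⟩ := hGH
  obtain ⟨i₀, hp⟩ := exists_forall_mem_eq_of_pairwise_disjoint hdisj p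
  obtain ⟨i₁, hq⟩ := exists_forall_mem_eq_of_pairwise_disjoint hdisj q
  have hgood : ∀ i : ({i₀, i₁}ᶜ : Set W), F i ⊆ {p, q}ᶜ := by
    rintro ⟨i, hi⟩ v hv (rfl | rfl)
    · exact hi (.inl (hp i hv))
    · exact hi (.inr (hq i hv))
  refine ⟨i₀, i₁, fun i => φ '' F i, ⟨fun i => (hne i).image φ,
    fun i => (hφ.mono (hgood i)).ordConnected_image (hconn i), fun i j hij => ?_,
    fun i j hij => ?_⟩⟩
  · refine Set.disjoint_image_image fun a ha b hb hab => ?_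
    exact (hdisj (Subtype.coe_injective.ne hij)).ne_of_mem ha hb
      (hinj (hgood i ha) (hgood j hb) hab)
  · obtain ⟨a, ha, b, hb, hab⟩ := hadj i j hij
    exact ⟨φ a, ⟨a, ha, rfl⟩, φ b, ⟨b, hb, rfl⟩, hφ (hgood i ha) (hgood j hb) hab⟩

end Minors

section Planarity

variable {V : Type} {G : SimpleGraph V} {p q : V} {φ : V → ℕ}

theorem exists_three_ne_of_fin_five (i j : Fin 5) : ∃ a b c : Fin 5,
    a ≠ b ∧ a ≠ c ∧ b ≠ c ∧ a ≠ i ∧ a ≠ j ∧ b ≠ i ∧ b ≠ j ∧ c ≠ i ∧ c ≠ j := by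
  decide +revert

theorem not_hasMinor_completeGraph_five (hinj : Set.InjOn φ {p, q}ᶜ)
    (hφ : IsPathHomOn G {p, q}ᶜ φ) : ¬HasMinor G (SimpleGraph.completeGraph (Fin 5)) := by
  intro hG
  obtain ⟨i₀, i₁, g, hg⟩ := exists_isIntervalModel_of_hasMinor hinj hφ hG
  obtain ⟨a, b, c, hab, hac, hbc, ha₀, ha₁, hb₀, hb₁, hc₀, hc₁⟩ :=
    exists_three_ne_of_fin_five i₀ i₁
  exact hg.not_triangle (a := ⟨a, by simp [ha₀, ha₁]⟩) (b := ⟨b, by simp [hb₀, hb₁]⟩)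
    (c := ⟨c, by simp [hc₀, hc₁]⟩) (SimpleGraph.induce_adj.2 hab) (SimpleGraph.induce_adj.2 hbc)
    (SimpleGraph.induce_adj.2 hac)

theorem exists_ne_ne_of_fin_three (i j : Fin 3) : ∃ a : Fin 3, a ≠ i ∧ a ≠ j := by
  decide +revert

theorem exists_pair_ne_of_fin_three (i : Fin 3) : ∃ a b : Fin 3, a ≠ b ∧ a ≠ i ∧ b ≠ i := by
  decide +revert

theorem not_isIntervalModel_completeBipartiteGraph_induce_inl_inr (p q : Fin 3)
    {g : Fin 3 ⊕ Fin 3 → Set ℕ} (hg : IsIntervalModel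
      ((completeBipartiteGraph (Fin 3) (Fin 3)).induce {.inl p, .inr q}ᶜ) fun i => g i) :
    False := by
  obtain ⟨a₁, a₂, ha, ha₁, ha₂⟩ := exists_pair_ne_of_fin_three p
  obtain ⟨b₁, b₂, hb, hb₁, hb₂⟩ := exists_pair_ne_of_fin_three q
  have adj {a b : Fin 3} {ha hb} :
      ((completeBipartiteGraph (Fin 3) (Fin 3)).induce {.inl p, .inr q}ᶜ).Adj
        ⟨.inl a, ha⟩ ⟨.inr b, hb⟩ :=
    SimpleGraph.induce_adj.2 (by simp)
  exact hg.not_square (a := ⟨.inl a₁, by simp [ha₁]⟩) (b := ⟨.inr b₁, by simp [hb₁]⟩)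
    (c := ⟨.inl a₂, by simp [ha₂]⟩) (d := ⟨.inr b₂, by simp [hb₂]⟩) adj adj.symm adj adj.symm
    (Subtype.coe_ne_coe.1 (by simpa using ha)) (Subtype.coe_ne_coe.1 (by simpa using hb))

theorem not_hasMinor_completeBipartiteGraph_three (hinj : Set.InjOn φ {p, q}ᶜ)
    (hφ : IsPathHomOn G {p, q}ᶜ φ) : ¬HasMinor G (completeBipartiteGraph (Fin 3) (Fin 3)) := by
  intro hG
  obtain ⟨i₀, i₁, g, hg⟩ := exists_isIntervalModel_of_hasMinor hinj hφ hG
  have adj {a b : Fin 3} {ha hb} : (completeBipartiteGraph (Fin 3) (Fin 3)).induce {i₀, i₁}ᶜ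
      |>.Adj ⟨.inl a, ha⟩ ⟨.inr b, hb⟩ := SimpleGraph.induce_adj.2 (by simp)
  rcases i₀ with p | p <;> rcases i₁ with q | q
  · obtain ⟨a, hp, hq⟩ := exists_ne_ne_of_fin_three p q
    exact hg.not_claw (a := ⟨.inl a, by simp [hp, hq]⟩) (b := ⟨.inr 0, by simp⟩)
      (c := ⟨.inr 1, by simp⟩) (d := ⟨.inr 2, by simp⟩) adj adj adj (by simp) (by simp) (by simp)
  · exact not_isIntervalModel_completeBipartiteGraph_induce_inl_inr p q hg
  · rw [Set.pair_comm] at hg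
    exact not_isIntervalModel_completeBipartiteGraph_induce_inl_inr q p hg
  · obtain ⟨b, hp, hq⟩ := exists_ne_ne_of_fin_three p q
    exact hg.not_claw (a := ⟨.inr b, by simp [hp, hq]⟩) (b := ⟨.inl 0, by simp⟩)
      (c := ⟨.inl 1, by simp⟩) (d := ⟨.inl 2, by simp⟩) adj.symm adj.symm adj.symm
      (by simp) (by simp) (by simp)

theorem isPlanar_of_isPathHomOn (hinj : Set.InjOn φ {p, q}ᶜ) (hφ : IsPathHomOn G {p, q}ᶜ φ) :
    IsPlanar G :=
  ⟨not_hasMinor_completeGraph_five hinj hφ, not_hasMinor_completeBipartiteGraph_three hinj hφ⟩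

end Planarity

open Finset in
theorem Fin.card_filter_same_pair_eq_one {m : ℕ} (hm : Even m) (a : Fin m) :
    #{b : Fin m | a ≠ b ∧ ((a : ℕ) / 2 = b / 2 ∨ (b : ℕ) / 2 = a / 2)} = 1 := by
  obtain ⟨k, rfl⟩ := hm
  refine Finset.card_eq_one.2
    ⟨⟨if (a : ℕ) % 2 = 0 then a + 1 else a - 1, by split_ifs <;> omega⟩, ?_⟩
  ext b
  simp only [Finset.mem_filter, Finset.mem_univ, true_and, Finset.mem_singleton, ne_eq,
    Fin.ext_iff]
  split_ifs <;> omega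

open Finset in
theorem Fin.card_filter_val_eq_zero_or_eq_two {m : ℕ} (hm : 2 < m) :
    #{a : Fin m | (a : ℕ) = 0 ∨ (a : ℕ) = 2} = 2 :=
  Finset.card_eq_two.2 ⟨⟨0, by omega⟩, ⟨2, hm⟩, by simp, by ext; simp [Fin.ext_iff]⟩

theorem eq_or_eq_or_eq_of_mem_pair {α : Type*} {p q x y z : α} (hx : x ∈ ({p, q} : Set α))
    (hy : y ∈ ({p, q} : Set α)) (hz : z ∈ ({p, q} : Set α)) : x = y ∨ x = z ∨ y = z := by
  rcases hx with rfl | rfl <;> rcases hy with rfl | rfl <;> rcases hz with rfl | rfl <;> simp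

theorem c3Theta4_adj_inr_inr {s t : Fin 4} (h : theta4.Adj s t) :
    c3Theta4.Adj (.inr s) (.inr t) := by
  simpa [c3Theta4] using ⟨h.ne, .inl h⟩

theorem exists_center_mem_pair {V : Type} {G : SimpleGraph V} {p q : V} (φ : c3Theta4 →g G)
    (hφ : Function.Injective φ) (hmeet : ∀ a b c, G.Adj a b → G.Adj b c → G.Adj a c →
      a ∈ ({p, q} : Set V) ∨ b ∈ ({p, q} : Set V) ∨ c ∈ ({p, q} : Set V)) :
    ∃ j : Fin 4, (j = 0 ∨ j = 2) ∧ φ (.inr j) ∈ ({p, q} : Set V) ∧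
      ∀ t, t ≠ j → φ (.inr t) ∉ ({p, q} : Set V) := by
  have meets {a b c} (hab : c3Theta4.Adj a b) (hbc : c3Theta4.Adj b c)
      (hac : c3Theta4.Adj a c) := hmeet _ _ _ (φ.map_adj hab) (φ.map_adj hbc) (φ.map_adj hac)
  have meetsΘ {a b c : Fin 4} (hab : theta4.Adj a b) (hbc : theta4.Adj b c)
      (hac : theta4.Adj a c) := meets (c3Theta4_adj_inr_inr hab) (c3Theta4_adj_inr_inr hbc)
        (c3Theta4_adj_inr_inr hac)
  obtain ⟨c, hc⟩ : ∃ c : Fin 3, φ (.inl c) ∈ ({p, q} : Set V) := by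
    rcases meets (a := .inl 0) (b := .inl 1) (c := .inl 2) (by simp [c3Theta4])
      (by simp [c3Theta4]) (by simp [c3Theta4]) with h | h | h
    exacts [⟨_, h⟩, ⟨_, h⟩, ⟨_, h⟩]
  have unique {s t : Fin 4} (hs : φ (.inr s) ∈ ({p, q} : Set V))
      (ht : φ (.inr t) ∈ ({p, q} : Set V)) : s = t := by
    rcases eq_or_eq_or_eq_of_mem_pair hc hs ht with h | h | h
    · exact absurd (hφ h) (by simp)
    · exact absurd (hφ h) (by simp)
    · simpa using hφ h
  obtain ⟨j, hj, hjmem⟩ : ∃ j : Fin 4, (j = 0 ∨ j = 2) ∧ φ (.inr j) ∈ ({p, q} : Set V) := by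
    rcases meetsΘ (a := 0) (b := 1) (c := 2) (by simp [theta4]) (by simp [theta4])
      (by simp [theta4]) with h | h | h
    · exact ⟨0, .inl rfl, h⟩
    · rcases meetsΘ (a := 0) (b := 2) (c := 3) (by simp [theta4]) (by simp [theta4])
        (by simp [theta4]) with h' | h' | h' <;>
        exact absurd (unique h h') (by decide)
    · exact ⟨2, .inr rfl, h⟩
  exact ⟨j, hj, hjmem, fun t ht h => ht (unique h hjmem)⟩

namespace K2VeeM

variable {n : ℕ}

abbrev Vertex (n : ℕ) := (Fin 2 ⊕ Fin (n - 3)) ⊕ Unit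

/-- The vertices `x`, `y` of `K₂`. -/
def hubs : Set (Vertex n) := {.inl (.inl 0), .inl (.inl 1)}

/-- Position along the path `1 – 0 – u – 2 – 3` (with `u` at position 2), followed by the
remaining matching edges. -/
def matchingPos (a : ℕ) : ℕ :=
  if a = 0 then 1 else if a = 1 then 0 else if a = 2 then 3 else if a = 3 then 4 else a + 2

theorem matchingPos_injective : Function.Injective matchingPos := by
  intro a b h
  unfold matchingPos at h
  split_ifs at h <;> omega

theorem matchingPos_ne_two (a : ℕ) : matchingPos a ≠ 2 := by
  unfold matchingPos
  split_ifs <;> omega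

theorem matchingPos_adj {a b : ℕ} (hab : a ≠ b) (h : a / 2 = b / 2) :
    matchingPos a + 1 = matchingPos b ∨ matchingPos b + 1 = matchingPos a := by
  unfold matchingPos
  split_ifs <;> omega

def pathPos : Vertex n → ℕ
  | .inl (.inl _) => 0
  | .inl (.inr a) => matchingPos a
  | .inr () => 2

theorem exists_eq_or_eq_of_notMem_hubs {v : Vertex n} (hv : v ∉ hubs) :
    (∃ a, v = .inl (.inr a)) ∨ v = .inr () := by
  rcases v with (i | a) | ⟨⟩
  · fin_cases i <;> simp [hubs] at hv
  · exact .inl ⟨a, rfl⟩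
  · exact .inr rfl

theorem pathPos_injOn : Set.InjOn (pathPos (n := n)) hubsᶜ := by
  intro v hv w hw h
  rcases exists_eq_or_eq_of_notMem_hubs hv with ⟨a, rfl⟩ | rfl <;>
    rcases exists_eq_or_eq_of_notMem_hubs hw with ⟨b, rfl⟩ | rfl
  · simpa [Fin.ext_iff] using matchingPos_injective h
  · exact (matchingPos_ne_two a h).elim
  · exact (matchingPos_ne_two b h.symm).elim
  · rfl

theorem isPathHomOn_pathPos : IsPathHomOn (k2veeM n) hubsᶜ pathPos := by
  intro v hv w hw h
  rcases exists_eq_or_eq_of_notMem_hubs hv with ⟨a, rfl⟩ | rfl <;>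
    rcases exists_eq_or_eq_of_notMem_hubs hw with ⟨b, rfl⟩ | rfl <;>
    simp only [k2veeM, SimpleGraph.fromRel_adj, ne_eq, Sum.inl.injEq, Sum.inr.injEq,
      reduceCtorEq, not_false_eq_true, true_and, or_false, false_or] at h
  · exact matchingPos_adj (by simpa [Fin.ext_iff] using h.1) (h.2.elim id Eq.symm)
  · rcases h with h | h <;> simp [pathPos, matchingPos, h]
  · rcases h with h | h <;> simp [pathPos, matchingPos, h]
  · simp at h

theorem isPlanar : IsPlanar (k2veeM n) :=
  isPlanar_of_isPathHomOn pathPos_injOn isPathHomOn_pathPos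

theorem exists_eq_inl_inr_of_adj_hub {h v : Vertex n} (hh : h ∈ hubs) (hv : v ∉ hubs)
    (hhv : (k2veeM n).Adj h v) : ∃ a, v = .inl (.inr a) := by
  refine (exists_eq_or_eq_of_notMem_hubs hv).resolve_right ?_
  rintro rfl
  rcases hh with rfl | rfl <;> simp [k2veeM] at hhv

theorem eq_of_adj_of_adj {a b c : Fin (n - 3)}
    (hab : (k2veeM n).Adj (.inl (.inr a)) (.inl (.inr b)))
    (hac : (k2veeM n).Adj (.inl (.inr a)) (.inl (.inr c))) : b = c := by
  simp only [k2veeM, SimpleGraph.fromRel_adj, ne_eq, Sum.inl.injEq, Sum.inr.injEq,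
    Fin.ext_iff] at hab hac
  omega

/-- The non-hub neighbours of a hub induce a matching. -/
theorem eq_of_adj_of_adj_of_adj_hub {h v w₁ w₂ : Vertex n} (hh : h ∈ hubs) (hv : v ∉ hubs)
    (hw₁ : w₁ ∉ hubs) (hw₂ : w₂ ∉ hubs) (hhv : (k2veeM n).Adj h v)
    (hhw₁ : (k2veeM n).Adj h w₁) (hhw₂ : (k2veeM n).Adj h w₂) (hvw₁ : (k2veeM n).Adj v w₁)
    (hvw₂ : (k2veeM n).Adj v w₂) : w₁ = w₂ := by
  obtain ⟨a, rfl⟩ := exists_eq_inl_inr_of_adj_hub hh hv hhv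
  obtain ⟨b, rfl⟩ := exists_eq_inl_inr_of_adj_hub hh hw₁ hhw₁
  obtain ⟨c, rfl⟩ := exists_eq_inl_inr_of_adj_hub hh hw₂ hhw₂
  rw [eq_of_adj_of_adj hvw₁ hvw₂]

theorem not_contains_c3Theta4 : ¬Contains (k2veeM n) c3Theta4 := by
  rintro ⟨φ, hφ⟩
  have adj {s t : Fin 4} (h : theta4.Adj s t) : (k2veeM n).Adj (φ (.inr s)) (φ (.inr t)) :=
    φ.map_adj (c3Theta4_adj_inr_inr h)
  obtain ⟨j, hj, hjmem, other⟩ := exists_center_mem_pair φ hφ fun a b c hab hbc hac => by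
    by_contra! h
    exact isPathHomOn_pathPos.not_triangle h.1 h.2.1 h.2.2 hab hbc hac
  rcases hj with rfl | rfl
  · have := eq_of_adj_of_adj_of_adj_hub hjmem (other 2 (by decide)) (other 1 (by decide))
      (other 3 (by decide)) (adj (by simp [theta4])) (adj (by simp [theta4]))
      (adj (by simp [theta4])) (adj (by simp [theta4])) (adj (by simp [theta4]))
    simpa using hφ this
  · have := eq_of_adj_of_adj_of_adj_hub hjmem (other 0 (by decide)) (other 1 (by decide))
      (other 3 (by decide)) (adj (by simp [theta4])) (adj (by simp [theta4]))
      (adj (by simp [theta4])) (adj (by simp [theta4])) (adj (by simp [theta4]))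
    simpa using hφ this

theorem two_mul_ncard_edgeSet (hn : 7 ≤ n) (hm : Even (n - 3)) :
    2 * (k2veeM n).edgeSet.ncard = 5 * n - 9 := by
  classical
  rw [← SimpleGraph.coe_edgeFinset, Set.ncard_coe_finset,
    ← SimpleGraph.sum_degrees_eq_twice_card_edges]
  simp only [← SimpleGraph.card_neighborFinset_eq_degree, SimpleGraph.neighborFinset_eq_filter,
    Finset.card_filter, Fintype.sum_sum_type]
  simp [k2veeM, Fin.card_filter_same_pair_eq_one hm, Finset.sum_add_distrib,
    Fin.card_filter_val_eq_zero_or_eq_two (show 2 < n - 3 by omega)]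
  omega

end K2VeeM

/-- For odd n (≥ 7, so that the matching has two distinct edges),
the graph K₂ ∨ M_{n−2} is planar, has n vertices and ⌊5n/2⌋ − 4 edges, and
contains no vertex-disjoint union of C₃ and Θ₄. -/
theorem stmt15 (n : ℕ) (hodd : Odd n) (hn : 7 ≤ n) :
    IsPlanar (k2veeM n) ∧
    Fintype.card ((Fin 2 ⊕ Fin (n - 3)) ⊕ Unit) = n ∧
    (k2veeM n).edgeSet.ncard = 5 * n / 2 - 4 ∧
    ¬ Contains (k2veeM n) c3Theta4 := by
  obtain ⟨k, rfl⟩ := hodd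
  have hm : Even (2 * k + 1 - 3) := ⟨k - 1, by omega⟩
  have hedges := K2VeeM.two_mul_ncard_edgeSet hn hm
  refine ⟨K2VeeM.isPlanar, ?_, by omega, K2VeeM.not_contains_c3Theta4⟩
  simp only [Fintype.card_sum, Fintype.card_fin, Fintype.card_unit]
  omega
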